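/- arXiv:1905.13152 — 2 statements merged into one kernel-verified Lean document; each statement's English description precedes it below -/
import Mathlib

section
/- Let d≥2, k≥1 be integers, h∈{0,…,k−1}, and let R>0, θ∈(0,π/(2k)), β∈(0,1/d). Then the open set B_h(R,θ,β)⊆ℂ^d is nonempty and homotopy equivalent to the (d−1)-dimensional torus (S^1)^{d−1}. -/
open Complex Metric Set Filter Topology Asymptotics

noncomputable section

/-- The product `π(z) = z^1 ⋯ z^d`. -/
def pprod {d : ℕ} (z : Fin d → ℂ) : ℂ := ∏ j, z j

/-- The normal form `F_N(z) = Λz·(1 − π(z)^k/(kd))`. -/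
def FN {d : ℕ} (lam : Fin d → ℂ) (k : ℕ) (z : Fin d → ℂ) : Fin d → ℂ :=
  fun j => lam j * z j * (1 - pprod z ^ k / ((k : ℂ) * (d : ℂ)))

/-- One-resonance of index `(1,…,1)`: `λ^m = λ_j` iff `m = (q,…,q) + e_j`. -/
def OneResonant {d : ℕ} (lam : Fin d → ℂ) : Prop :=
  ∀ (m : Fin d → ℕ) (j : Fin d),
    (∏ i, lam i ^ m i) = lam j ↔ ∃ q : ℕ, ∀ i, m i = q + if i = j then 1 else 0

/-- `F` is of the form (*): `F(z) = F_N(z) + O(‖z‖^l)` as `z → 0`. -/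
def FormStar {d : ℕ} (lam : Fin d → ℂ) (k l : ℕ) (F : (Fin d → ℂ) → (Fin d → ℂ)) : Prop :=
  (fun z => F z - FN lam k z) =O[𝓝 (0 : Fin d → ℂ)] fun z => ‖z‖ ^ l

/-- The attracting sector `S_h(R,θ)`; the argument condition `|arg u − 2πh/k| < θ`
is expressed mod `2π` by rotating `u` by `e^{-2πih/k}`. -/
def Ssector (k h : ℕ) (R θ : ℝ) : Set ℂ :=
  {u | ‖u ^ k - 1 / (2 * R)‖ < 1 / (2 * R) ∧
    |Complex.arg (u * Complex.exp ((-(2 * Real.pi * (h : ℝ) / (k : ℝ)) : ℝ) * Complex.I))| < θ}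

/-- `W(β) = {z : |z^j| < |π(z)|^β for all j}`. -/
def Wset (d : ℕ) (β : ℝ) : Set (Fin d → ℂ) :=
  {z | ∀ j, ‖z j‖ < ‖pprod z‖ ^ β}

/-- The local basin `B_h(R,θ,β)`. -/
def Bset (d k h : ℕ) (R θ β : ℝ) : Set (Fin d → ℂ) :=
  {z | z ∈ Wset d β ∧ pprod z ∈ Ssector k h R θ}

/-- The local basin hypothesis for the constants `(R₀, θ₀, β₀)`. -/
def LocalBasinHyp (d k l : ℕ) (F : (Fin d → ℂ) → (Fin d → ℂ)) (R0 θ0 β0 : ℝ) : Prop :=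
  0 < R0 ∧ θ0 ∈ Ioo 0 (Real.pi / (2 * (k : ℝ))) ∧ β0 ∈ Ioo 0 (1 / (d : ℝ)) ∧
    (2 * (k : ℝ) + 1) < β0 * ((l : ℝ) + (d : ℝ) - 1) ∧
    ∀ h : ℕ, h < k →
      MapsTo F (Bset d k h R0 θ0 β0) (Bset d k h R0 θ0 β0) ∧
      TendstoUniformlyOn (fun n z => F^[n] z) (fun _ => 0) atTop (Bset d k h R0 θ0 β0)

/-- The global basin `Ω_h = ⋃ₙ F^{-n}(B_h)`. -/
def GlobalBasin (d k : ℕ) (F : (Fin d → ℂ) → (Fin d → ℂ)) (h : ℕ) (R0 θ0 β0 : ℝ) :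
    Set (Fin d → ℂ) :=
  ⋃ n : ℕ, F^[n] ⁻¹' Bset d k h R0 θ0 β0

/-- `|α| = α₁ + ⋯ + α_d` for a multi-index `α`. -/
def degree {d : ℕ} (α : Fin d → ℕ) : ℕ := ∑ i, α i

/-- `λ^α = λ₁^{α₁} ⋯ λ_d^{α_d}`. -/
def lampow {d : ℕ} (lam : Fin d → ℂ) (α : Fin d → ℕ) : ℂ := ∏ i, lam i ^ α i

/-- The minimal divisor function `ω_A(r)`. -/
def omegaA {d : ℕ} (lam : Fin d → ℂ) (A : Set (Fin d → ℕ)) (r : ℕ) : ℝ :=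
  sInf ({x | ∃ α ∈ A, 2 ≤ degree α ∧ degree α ≤ r ∧
    ∃ i, x = ‖lampow lam α - lam i‖} ∪ {1})

/-- `A ⊆ ℕ^d` is a Brjuno set for `(λ₁,…,λ_d)`:
`Σ_{m ≥ 1} 2^{-m} log(1/ω_A(2^m)) < ∞`. -/
def BrjunoSet {d : ℕ} (lam : Fin d → ℂ) (A : Set (Fin d → ℕ)) : Prop :=
  Summable fun m : ℕ => (2 : ℝ)⁻¹ ^ (m + 1) * Real.log (1 / omegaA lam A (2 ^ (m + 1)))

/-- The subset Brjuno condition: each `M_j = {α : α_j = 0}` is a Brjuno set. -/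
def SubsetBrjuno {d : ℕ} (lam : Fin d → ℂ) : Prop :=
  ∀ j : Fin d, BrjunoSet lam {α | α j = 0}

/-- A holomorphic automorphism of `ℂ^d`. -/
def IsAutomorphism {d : ℕ} (F : (Fin d → ℂ) → (Fin d → ℂ)) : Prop :=
  Differentiable ℂ F ∧ ∃ Finv : (Fin d → ℂ) → (Fin d → ℂ),
    Differentiable ℂ Finv ∧ Function.LeftInverse Finv F ∧ Function.RightInverse Finv F

/-- `U` is biholomorphic to `V` (as domains in `ℂ^d`). -/
def BiholoTo {d : ℕ} (U V : Set (Fin d → ℂ)) : Prop :=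
  ∃ φ ψ : (Fin d → ℂ) → (Fin d → ℂ),
    DifferentiableOn ℂ φ U ∧ DifferentiableOn ℂ ψ V ∧ MapsTo φ U V ∧ MapsTo ψ V U ∧
    (∀ z ∈ U, ψ (φ z) = z) ∧ (∀ w ∈ V, φ (ψ w) = w)

/-- The model domain `ℂ^{d-m} × (ℂ*)^m ⊆ ℂ^d`: the last `m` coordinates are nonzero. -/
def CCStarTarget (d m : ℕ) : Set (Fin d → ℂ) := {w | ∀ j : Fin d, d - m ≤ (j : ℕ) → w j ≠ 0}

/-- The Fatou set of `F`: points with a neighborhood on which every subsequence of the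
iterates admits a further subsequence converging locally uniformly. -/
def FatouSet {d : ℕ} (F : (Fin d → ℂ) → (Fin d → ℂ)) : Set (Fin d → ℂ) :=
  {z | ∃ U ∈ 𝓝 z, ∀ φ : ℕ → ℕ, StrictMono φ →
    ∃ ψ : ℕ → ℕ, StrictMono ψ ∧ ∃ g : (Fin d → ℂ) → (Fin d → ℂ),
      TendstoLocallyUniformlyOn (fun m z => F^[φ (ψ m)] z) g atTop U}

/-- `S` is a Fatou component of `F`: a connected component of the Fatou set. -/
def IsFatouComponent {d : ℕ} (F : (Fin d → ℂ) → (Fin d → ℂ)) (S : Set (Fin d → ℂ)) : Prop :=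
  ∃ z ∈ FatouSet F, S = connectedComponentIn (FatouSet F) z

/-- `G` admits `N` disjoint `p`-periodic cycles of non-recurrent attracting Fatou
components, each biholomorphic to `T`, all attracted to the origin. -/
def FatouCycles {d : ℕ} (G : (Fin d → ℂ) → (Fin d → ℂ)) (N p : ℕ) (T : Set (Fin d → ℂ)) :
    Prop :=
  G 0 = 0 ∧ ∃ V : Fin N → Set (Fin d → ℂ),
    (∀ (i : Fin N) (q : ℕ), q < p → IsFatouComponent G (G^[q] '' V i)) ∧
    (∀ i : Fin N, G^[p] '' V i = V i) ∧
    (∀ (i : Fin N) (q : ℕ), 0 < q → q < p → G^[q] '' V i ≠ V i) ∧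
    (∀ (i i' : Fin N) (q q' : ℕ), q < p → q' < p → (i ≠ i' ∨ q ≠ q') →
      Disjoint (G^[q] '' V i) (G^[q'] '' V i')) ∧
    (∀ (i : Fin N) (q : ℕ), q < p → BiholoTo (G^[q] '' V i) T) ∧
    (∀ (i : Fin N) (q : ℕ), q < p → (0 : Fin d → ℂ) ∈ frontier (G^[q] '' V i)) ∧
    (∀ (i : Fin N) (q : ℕ), q < p →
      TendstoLocallyUniformlyOn (fun n z => G^[n] z) (fun _ => 0) atTop (G^[q] '' V i))

/-- The sector at infinity `H(R,θ) = {U : Re U > R, |arg U| < kθ}`. -/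
def Hsector (k : ℕ) (R θ : ℝ) : Set ℂ := {U | R < U.re ∧ |Complex.arg U| < (k : ℝ) * θ}

/-- The tube `T(R,θ,β)` in the coordinates `(U, z²,…,z^d)`. -/
def Tset (d k : ℕ) [NeZero d] (R θ β : ℝ) : Set (Fin d → ℂ) :=
  {w | w 0 ∈ Hsector k R θ ∧
    ‖w 0‖ ^ ((β - 1) / (k : ℝ)) <
      ‖∏ j ∈ Finset.univ.erase (0 : Fin d), w j‖ ∧
    ∀ j : Fin d, j ≠ 0 → ‖w j‖ < ‖w 0‖ ^ (-β / (k : ℝ))}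

/-- The Euclidean (ℓ²) norm on `ℂ^d`. -/
def l2norm {d : ℕ} (w : Fin d → ℂ) : ℝ := Real.sqrt (∑ j, ‖w j‖ ^ 2)


/-!
Write `u = π(z)`. A point of `B_h` is determined by `u ∈ S_h` and by its last `d - 1`
coordinates, all nonzero, and `B_h` deforms onto the torus
`{u = r^d e^{2πih/k}, |z^j| = r for j ≥ 2}` for a small radius `r`: the moduli `|u|` and `|z^j|`
(`j ≥ 2`) move geometrically to `r^d` and `r`, the argument of `u` measured from `2πh/k` shrinks
linearly to `0`, and the arguments of `z^2, …, z^d` stay fixed. The inequalities defining `W(β)`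
survive because `x ↦ x^β` commutes with weighted geometric means and `r < (r^d)^β` (as `dβ < 1`);
membership in `S_h` survives because in polar coordinates it reads `|u|^k < cos(k·arg)/R`, whose
right-hand side only grows as the argument shrinks.
-/

open scoped Real

def geomInterp (t x y : ℝ) : ℝ := x ^ (1 - t) * y ^ t

section geomInterp

variable {t x y : ℝ}

@[simp] lemma geomInterp_zero (x y : ℝ) : geomInterp 0 x y = x := by simp [geomInterp]

@[simp] lemma geomInterp_one (x y : ℝ) : geomInterp 1 x y = y := by simp [geomInterp]

lemma geomInterp_pos (hx : 0 < x) (hy : 0 < y) : 0 < geomInterp t x y := by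
  unfold geomInterp; positivity

lemma geomInterp_nonneg (hx : 0 ≤ x) (hy : 0 ≤ y) : 0 ≤ geomInterp t x y := by
  unfold geomInterp; positivity

lemma geomInterp_self (hx : 0 < x) (t : ℝ) : geomInterp t x x = x := by
  rw [geomInterp, ← Real.rpow_add hx, sub_add_cancel, Real.rpow_one]

lemma geomInterp_rpow (hx : 0 ≤ x) (hy : 0 ≤ y) (s : ℝ) :
    geomInterp t x y ^ s = geomInterp t (x ^ s) (y ^ s) := by
  simp only [geomInterp]
  rw [Real.mul_rpow (by positivity) (by positivity), ← Real.rpow_mul hx, ← Real.rpow_mul hy,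
    mul_comm (1 - t), mul_comm t, Real.rpow_mul hx, Real.rpow_mul hy]

lemma geomInterp_pow (hx : 0 ≤ x) (hy : 0 ≤ y) (k : ℕ) :
    geomInterp t x y ^ k = geomInterp t (x ^ k) (y ^ k) := by
  simpa only [Real.rpow_natCast] using geomInterp_rpow (t := t) hx hy k

lemma geomInterp_div {x' y' : ℝ} (hx : 0 ≤ x) (hy : 0 ≤ y) (hx' : 0 ≤ x') (hy' : 0 ≤ y') :
    geomInterp t (x / x') (y / y') = geomInterp t x y / geomInterp t x' y' := by
  simp only [geomInterp]
  rw [Real.div_rpow hx hx', Real.div_rpow hy hy']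
  ring

lemma prod_geomInterp {ι : Type*} (s : Finset ι) {f g : ι → ℝ} (hf : ∀ i ∈ s, 0 ≤ f i)
    (hg : ∀ i ∈ s, 0 ≤ g i) :
    ∏ i ∈ s, geomInterp t (f i) (g i) = geomInterp t (∏ i ∈ s, f i) (∏ i ∈ s, g i) := by
  simp only [geomInterp]
  rw [Finset.prod_mul_distrib, Real.finsetProd_rpow s f hf, Real.finsetProd_rpow s g hg]

lemma geomInterp_lt_geomInterp {x' y' : ℝ} (hx : 0 ≤ x) (hy : 0 ≤ y) (hxx' : x < x')
    (hyy' : y < y') (ht₀ : 0 ≤ t) (ht₁ : t ≤ 1) : geomInterp t x y < geomInterp t x' y' := by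
  rcases ht₀.eq_or_lt with rfl | ht₀
  · simpa using hxx'
  have hx' : 0 < x' := hx.trans_lt hxx'
  calc x ^ (1 - t) * y ^ t ≤ x' ^ (1 - t) * y ^ t := by gcongr
    _ < x' ^ (1 - t) * y' ^ t := by gcongr

end geomInterp

lemma Continuous.geomInterp {α : Type*} [TopologicalSpace α] {τ f g : α → ℝ}
    (hτ : Continuous τ) (hf : Continuous f) (hg : Continuous g) (hf₀ : ∀ a, f a ≠ 0)
    (hg₀ : ∀ a, g a ≠ 0) : Continuous fun a => _root_.geomInterp (τ a) (f a) (g a) :=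
  (hf.rpow (continuous_const.sub hτ) fun a => .inl (hf₀ a)).mul
    (hg.rpow hτ fun a => .inl (hg₀ a))

def relArg (ω : ℝ) (u : ℂ) : ℝ := arg (u * exp (↑(-ω) * I))

lemma ofReal_norm_mul_exp_relArg (ω : ℝ) (u : ℂ) :
    (‖u‖ : ℂ) * exp (↑(relArg ω u + ω) * I) = u := by
  have h := norm_mul_exp_arg_mul_I (u * exp (↑(-ω) * I))
  rw [norm_mul, norm_exp_ofReal_mul_I, mul_one] at h
  calc (‖u‖ : ℂ) * exp (↑(relArg ω u + ω) * I)
        = ‖u‖ * exp (↑(relArg ω u) * I) * exp (↑ω * I) := by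
          rw [mul_assoc, ← exp_add]; push_cast; ring_nf
    _ = u * exp (↑(-ω) * I) * exp (↑ω * I) := by rw [relArg, h]
    _ = u := by rw [mul_assoc, ← exp_add]; push_cast; simp

lemma relArg_ofReal_mul_exp (ω : ℝ) {ρ a : ℝ} (hρ : 0 < ρ) (ha : a ∈ Ioc (-π) π) :
    relArg ω (ρ * exp (↑(a + ω) * I)) = a := by
  rw [relArg, mul_assoc, ← exp_add, ← add_mul, ← ofReal_add, add_neg_cancel_right,
    arg_real_mul _ hρ, exp_mul_I, arg_cos_add_sin_mul_I ha]

lemma norm_ofReal_mul_exp {ρ : ℝ} (hρ : 0 ≤ ρ) (x : ℝ) : ‖(ρ : ℂ) * exp (x * I)‖ = ρ := by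
  rw [norm_mul, norm_exp_ofReal_mul_I, mul_one, norm_real, Real.norm_of_nonneg hρ]

lemma Continuous.relArg {α : Type*} [TopologicalSpace α] {f : α → ℂ} (hf : Continuous f)
    (ω : ℝ) (h : ∀ a, f a * exp (↑(-ω) * I) ∈ slitPlane) :
    Continuous fun a => _root_.relArg ω (f a) :=
  continuous_iff_continuousAt.2 fun a =>
    (continuousAt_arg (h a)).comp (f := fun b => f b * exp (↑(-ω) * I))
      (hf.mul continuous_const).continuousAt

lemma norm_sub_ofReal_lt_self_iff {c : ℝ} (hc : 0 ≤ c) (w : ℂ) :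
    ‖w - c‖ < c ↔ ‖w‖ ^ 2 < 2 * c * w.re := by
  rw [← pow_lt_pow_iff_left₀ (norm_nonneg _) hc two_ne_zero, Complex.sq_norm,
    Complex.sq_norm, normSq_apply, normSq_apply]
  simp only [sub_re, ofReal_re, sub_im, ofReal_im, sub_zero]
  constructor <;> intro h <;> nlinarith

lemma norm_ofReal_mul_exp_sub_lt_self_iff {s c ψ : ℝ} (hs : 0 < s) (hc : 0 ≤ c) :
    ‖s * exp (ψ * I) - c‖ < c ↔ s < 2 * c * Real.cos ψ := by
  rw [norm_sub_ofReal_lt_self_iff hc, norm_ofReal_mul_exp hs.le, re_ofReal_mul, exp_ofReal_mul_I_re,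
    sq, mul_left_comm]
  exact mul_lt_mul_iff_right₀ hs

def sectorAngle (k h : ℕ) : ℝ := 2 * π * h / k

lemma exp_natCast_mul_sectorAngle (k h : ℕ) : exp (↑(k * sectorAngle k h) * I) = 1 := by
  rcases eq_or_ne k 0 with rfl | hk
  · simp
  rw [sectorAngle, mul_div_cancel₀ _ (Nat.cast_ne_zero.2 hk), ← exp_nat_mul_two_pi_mul_I h]
  push_cast
  ring_nf

lemma ofReal_mul_exp_mem_Ssector_iff {k h : ℕ} {R θ ρ a : ℝ} (hR : 0 < R) (hρ : 0 < ρ)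
    (ha : a ∈ Ioc (-π) π) :
    (ρ : ℂ) * exp (↑(a + sectorAngle k h) * I) ∈ Ssector k h R θ ↔
      ρ ^ k < Real.cos (k * a) / R ∧ |a| < θ := by
  have hpow : ((ρ : ℂ) * exp (↑(a + sectorAngle k h) * I)) ^ k
      = ↑(ρ ^ k) * exp (↑(k * a) * I) := by
    rw [mul_pow, ← exp_nat_mul, ← ofReal_pow, ← mul_one (exp (↑(k * a) * I)),
      ← exp_natCast_mul_sectorAngle k h, ← exp_add]
    push_cast
    ring_nf
  have hc : (1 / (2 * R) : ℂ) = ↑(1 / (2 * R)) := by push_cast; rfl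
  have hcos : 2 * (1 / (2 * R)) * Real.cos (k * a) = Real.cos (k * a) / R := by
    field_simp
  change ‖_ - _‖ < _ ∧ |relArg (sectorAngle k h) _| < θ ↔ _
  rw [hpow, hc, norm_ofReal_mul_exp_sub_lt_self_iff (by positivity) (by positivity), hcos,
    relArg_ofReal_mul_exp _ hρ ha]

lemma mem_Ssector_iff {k h : ℕ} {R θ : ℝ} (hR : 0 < R) {u : ℂ} (hu : u ≠ 0) :
    u ∈ Ssector k h R θ ↔
      ‖u‖ ^ k < Real.cos (k * relArg (sectorAngle k h) u) / R ∧
        |relArg (sectorAngle k h) u| < θ := by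
  conv_lhs => rw [← ofReal_norm_mul_exp_relArg (sectorAngle k h) u]
  exact ofReal_mul_exp_mem_Ssector_iff hR (norm_pos_iff.2 hu) (arg_mem_Ioc _)

lemma ne_zero_of_mem_Ssector {k h : ℕ} {R θ : ℝ} (hk : k ≠ 0) {u : ℂ}
    (hu : u ∈ Ssector k h R θ) : u ≠ 0 := by
  rintro rfl
  have h := hu.1
  rw [zero_pow hk, zero_sub, norm_neg] at h
  have hc : (1 / (2 * R) : ℂ) = ↑(1 / (2 * R)) := by push_cast; rfl
  rw [hc, norm_real, Real.norm_eq_abs] at h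
  exact (le_abs_self _).not_gt h

lemma Real.cos_le_cos_of_abs_le {x y : ℝ} (hxy : |x| ≤ |y|) (hy : |y| ≤ π) :
    Real.cos y ≤ Real.cos x := by
  rw [← Real.cos_abs x, ← Real.cos_abs y]
  exact Real.cos_le_cos_of_nonneg_of_le_pi (abs_nonneg x) hy hxy

lemma Real.cos_lt_cos_of_abs_lt {x y : ℝ} (hxy : |x| < |y|) (hy : |y| ≤ π) :
    Real.cos y < Real.cos x := by
  rw [← Real.cos_abs x, ← Real.cos_abs y]
  exact Real.cos_lt_cos_of_nonneg_of_le_pi (abs_nonneg x) hy hxy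

def sectorInterp (ω t₀ t : ℝ) (u : ℂ) : ℂ :=
  (geomInterp t ‖u‖ t₀ : ℂ) * exp (↑((1 - t) * relArg ω u + ω) * I)

@[simp] lemma sectorInterp_zero (ω t₀ : ℝ) (u : ℂ) : sectorInterp ω t₀ 0 u = u := by
  simpa [sectorInterp] using ofReal_norm_mul_exp_relArg ω u

@[simp] lemma sectorInterp_one (ω t₀ : ℝ) (u : ℂ) :
    sectorInterp ω t₀ 1 u = t₀ * exp (↑ω * I) := by
  simp [sectorInterp]

lemma norm_sectorInterp (ω : ℝ) {t₀ : ℝ} (ht₀ : 0 ≤ t₀) (t : ℝ) (u : ℂ) :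
    ‖sectorInterp ω t₀ t u‖ = geomInterp t ‖u‖ t₀ :=
  norm_ofReal_mul_exp (geomInterp_nonneg (norm_nonneg u) ht₀) _

lemma sectorInterp_mem_Ssector {k h : ℕ} {R θ t₀ t : ℝ} (hk : k ≠ 0) (hR : 0 < R)
    (hkθ : k * θ ≤ π) (ht₀ : 0 < t₀) (ht₀k : t₀ ^ k ≤ Real.cos (k * θ) / R)
    (ht : t ∈ Icc (0 : ℝ) 1) {u : ℂ} (hu : u ∈ Ssector k h R θ) :
    sectorInterp (sectorAngle k h) t₀ t u ∈ Ssector k h R θ := by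
  have hk₀ : (0 : ℝ) < k := by positivity
  obtain ⟨hu_lt, ha⟩ := (mem_Ssector_iff hR (ne_zero_of_mem_Ssector hk hu)).1 hu
  set a := relArg (sectorAngle k h) u
  have hθ₀ : 0 < θ := (abs_nonneg a).trans_lt ha
  have hta : |(1 - t) * a| ≤ |a| := by
    rw [abs_mul]
    exact mul_le_of_le_one_left (abs_nonneg a) (abs_le.2 ⟨by linarith [ht.2], by linarith [ht.1]⟩)
  have hka : |k * a| < |k * θ| := by
    rw [abs_mul, abs_mul, Nat.abs_cast, abs_of_pos hθ₀]
    exact mul_lt_mul_of_pos_left ha hk₀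
  have hkθπ : |k * θ| ≤ π := by rwa [abs_of_pos (by positivity)]
  have hcos_t : Real.cos (k * a) ≤ Real.cos (k * ((1 - t) * a)) := by
    refine Real.cos_le_cos_of_abs_le ?_ (hka.le.trans hkθπ)
    rw [abs_mul, abs_mul (k : ℝ)]; gcongr
  have hcos_θ : Real.cos (k * θ) < Real.cos (k * a) := Real.cos_lt_cos_of_abs_lt hka hkθπ
  have ht₀_lt : t₀ ^ k < Real.cos (k * a) / R :=
    ht₀k.trans_lt (div_lt_div_of_pos_right hcos_θ hR)
  have hcos_pos : 0 < Real.cos (k * a) / R := (pow_pos ht₀ k).trans ht₀_lt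
  refine (ofReal_mul_exp_mem_Ssector_iff hR (geomInterp_pos (norm_pos_iff.2
    (ne_zero_of_mem_Ssector hk hu)) ht₀) ?_).2 ⟨?_, hta.trans_lt ha⟩
  · have hθk : θ ≤ k * θ :=
      le_mul_of_one_le_left hθ₀.le (by exact_mod_cast Nat.one_le_iff_ne_zero.2 hk)
    have : |(1 - t) * a| < π := by linarith
    exact ⟨by linarith [neg_abs_le ((1 - t) * a)], by linarith [le_abs_self ((1 - t) * a)]⟩
  calc geomInterp t ‖u‖ t₀ ^ k = geomInterp t (‖u‖ ^ k) (t₀ ^ k) :=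
        geomInterp_pow (norm_nonneg u) ht₀.le k
    _ < geomInterp t (Real.cos (k * a) / R) (Real.cos (k * a) / R) :=
        geomInterp_lt_geomInterp (by positivity) (by positivity) hu_lt ht₀_lt ht.1 ht.2
    _ = Real.cos (k * a) / R := geomInterp_self hcos_pos t
    _ ≤ Real.cos (k * ((1 - t) * a)) / R := by gcongr

lemma Continuous.sectorInterp {α : Type*} [TopologicalSpace α] {τ : α → ℝ} {f : α → ℂ}
    {ω t₀ : ℝ} (hτ : Continuous τ) (hf : Continuous f)
    (hf_slit : ∀ a, f a * exp (↑(-ω) * I) ∈ slitPlane) (ht₀ : t₀ ≠ 0) :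
    Continuous fun a => _root_.sectorInterp ω t₀ (τ a) (f a) := by
  have hf₀ : ∀ a, ‖f a‖ ≠ 0 := fun a =>
    norm_ne_zero_iff.2 (left_ne_zero_of_mul (slitPlane_ne_zero (hf_slit a)))
  have hρ := hτ.geomInterp (continuous_norm.comp hf) continuous_const hf₀ fun _ => ht₀
  have harg := hf.relArg ω hf_slit
  unfold _root_.sectorInterp
  fun_prop

def radialInterp (r t : ℝ) (z : ℂ) : ℂ := (geomInterp t ‖z‖ r : ℂ) * (z / ‖z‖)

@[simp] lemma radialInterp_zero (r : ℝ) (z : ℂ) : radialInterp r 0 z = z := by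
  rcases eq_or_ne z 0 with rfl | hz
  · simp [radialInterp]
  · simp [radialInterp, mul_div_cancel₀ _ (ofReal_ne_zero.2 (norm_ne_zero_iff.2 hz))]

@[simp] lemma radialInterp_one (r : ℝ) (z : ℂ) : radialInterp r 1 z = r * (z / ‖z‖) := by
  simp [radialInterp]

lemma norm_radialInterp {r : ℝ} (hr : 0 ≤ r) (t : ℝ) {z : ℂ} (hz : z ≠ 0) :
    ‖radialInterp r t z‖ = geomInterp t ‖z‖ r := by
  rw [radialInterp, norm_mul, norm_div, norm_real, norm_real, norm_norm,
    Real.norm_of_nonneg (geomInterp_nonneg (norm_nonneg z) hr),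
    div_self (norm_ne_zero_iff.2 hz), mul_one]

lemma Continuous.radialInterp {α : Type*} [TopologicalSpace α] {τ : α → ℝ} {f : α → ℂ}
    {r : ℝ} (hτ : Continuous τ) (hf : Continuous f) (hf₀ : ∀ a, f a ≠ 0) (hr : r ≠ 0) :
    Continuous fun a => _root_.radialInterp r (τ a) (f a) := by
  have hf₀' : ∀ a, ‖f a‖ ≠ 0 := fun a => norm_ne_zero_iff.2 (hf₀ a)
  have hρ := hτ.geomInterp (continuous_norm.comp hf) continuous_const hf₀' fun _ => hr
  exact (continuous_ofReal.comp hρ).mul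
    (hf.div (continuous_ofReal.comp (continuous_norm.comp hf)) fun a => ofReal_ne_zero.2 (hf₀' a))

def withProd {n : ℕ} (u : ℂ) (v : Fin n → ℂ) : Fin (n + 1) → ℂ := Fin.cons (u / ∏ i, v i) v

section withProd

variable {n : ℕ}

lemma pprod_withProd (u : ℂ) {v : Fin n → ℂ} (hv : ∀ i, v i ≠ 0) : pprod (withProd u v) = u := by
  rw [pprod, Fin.prod_univ_succ]
  exact div_mul_cancel₀ u (Finset.prod_ne_zero_iff.2 fun i _ => hv i)

lemma withProd_pprod_tail {z : Fin (n + 1) → ℂ} (hz : ∀ j, z j ≠ 0) :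
    withProd (pprod z) (Fin.tail z) = z := by
  ext j
  refine Fin.cases ?_ (fun _ => rfl) j
  rw [withProd, Fin.cons_zero, pprod, Fin.prod_univ_succ]
  exact mul_div_cancel_right₀ _ (Finset.prod_ne_zero_iff.2 fun i _ => hz i.succ)

lemma withProd_mem_Bset {k h : ℕ} {R θ β : ℝ} {u : ℂ} {v : Fin n → ℂ} (hv : ∀ i, v i ≠ 0)
    (hu : u ∈ Ssector k h R θ) (hhead : ‖u‖ / ∏ i, ‖v i‖ < ‖u‖ ^ β)
    (htail : ∀ i, ‖v i‖ < ‖u‖ ^ β) : withProd u v ∈ Bset (n + 1) k h R θ β := by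
  refine ⟨fun j => ?_, by rwa [pprod_withProd u hv]⟩
  rw [pprod_withProd u hv]
  refine Fin.cases ?_ htail j
  rwa [withProd, Fin.cons_zero, norm_div, norm_prod]

lemma Continuous.withProd {α : Type*} [TopologicalSpace α] {u : α → ℂ} {v : α → Fin n → ℂ}
    (hu : Continuous u) (hv : Continuous v) (hv₀ : ∀ a i, v a i ≠ 0) :
    Continuous fun a => _root_.withProd (u a) (v a) := by
  refine continuous_pi fun j => Fin.cases ?_ (fun i => (continuous_apply i).comp hv) j
  exact hu.div (continuous_finsetProd _ fun i _ => (continuous_apply i).comp hv)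
    fun a => Finset.prod_ne_zero_iff.2 fun i _ => hv₀ a i

end withProd

lemma ne_zero_of_mem_Bset {d k h : ℕ} {R θ β : ℝ} (hk : k ≠ 0) {z : Fin d → ℂ}
    (hz : z ∈ Bset d k h R θ β) (j : Fin d) : z j ≠ 0 :=
  fun hj => ne_zero_of_mem_Ssector hk hz.2 (Finset.prod_eq_zero (Finset.mem_univ j) hj)

structure IsBasinRadius (n k : ℕ) (R θ β r : ℝ) : Prop where
  pos : 0 < r
  lt_rpow : r < (r ^ (n + 1)) ^ β
  pow_lt_cos : (r ^ (n + 1)) ^ k < Real.cos (k * θ) / R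

lemma exists_isBasinRadius {n k : ℕ} {R θ β : ℝ} (hk : k ≠ 0) (hR : 0 < R)
    (hθ₀ : 0 < θ) (hkθ : k * θ < π / 2) (hβ : (n + 1) * β < 1) :
    ∃ r, IsBasinRadius n k R θ β r := by
  have hX : 0 < Real.cos (k * θ) / R :=
    div_pos (Real.cos_pos_of_mem_Ioo ⟨by nlinarith [Real.pi_pos], hkθ⟩) hR
  set r := min (1 / 2) (Real.cos (k * θ) / R / 2)
  have hr₀ : 0 < r := lt_min one_half_pos (half_pos hX)
  have hr₁ : r < 1 := (min_le_left _ _).trans_lt one_half_lt_one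
  refine ⟨r, hr₀, ?_, ?_⟩
  · rw [← Real.rpow_natCast, ← Real.rpow_mul hr₀.le]
    conv_lhs => rw [← Real.rpow_one r]
    exact Real.rpow_lt_rpow_of_exponent_gt hr₀ hr₁ (by push_cast; linarith)
  · calc (r ^ (n + 1)) ^ k = r ^ ((n + 1) * k) := (pow_mul r _ _).symm
      _ ≤ r := pow_le_of_le_one hr₀.le hr₁.le (mul_ne_zero n.succ_ne_zero hk)
      _ ≤ Real.cos (k * θ) / R / 2 := min_le_right _ _
      _ < Real.cos (k * θ) / R := half_lt_self hX

lemma mul_exp_mem_slitPlane_of_mem_Ssector {k h : ℕ} {R θ : ℝ} (hk : k ≠ 0) (hθ : θ ≤ π)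
    {u : ℂ} (hu : u ∈ Ssector k h R θ) : u * exp (↑(-sectorAngle k h) * I) ∈ slitPlane :=
  mem_slitPlane_iff_arg.2 ⟨fun hπ => by
    have harg : |arg (u * exp (↑(-sectorAngle k h) * I))| < θ := hu.2
    rw [hπ, abs_of_pos Real.pi_pos] at harg
    linarith, mul_ne_zero (ne_zero_of_mem_Ssector hk hu) (exp_ne_zero _)⟩

def basinDeformation {n : ℕ} (k h : ℕ) (r t : ℝ) (z : Fin (n + 1) → ℂ) : Fin (n + 1) → ℂ :=
  withProd (sectorInterp (sectorAngle k h) (r ^ (n + 1)) t (pprod z))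
    fun i => radialInterp r t (z i.succ)

def torusPoint {n : ℕ} (k h : ℕ) (r : ℝ) (w : Fin n → ℂ) : Fin (n + 1) → ℂ :=
  withProd (↑(r ^ (n + 1)) * exp (↑(sectorAngle k h) * I)) fun i => r * w i

section basin

variable {n k h : ℕ} {R θ β r : ℝ}

lemma basinDeformation_zero {z : Fin (n + 1) → ℂ} (hz : ∀ j, z j ≠ 0) :
    basinDeformation k h r 0 z = z := by
  simp only [basinDeformation, radialInterp_zero, sectorInterp_zero]
  exact withProd_pprod_tail hz

lemma basinDeformation_one (z : Fin (n + 1) → ℂ) :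
    basinDeformation k h r 1 z = torusPoint k h r fun i => z i.succ / ‖z i.succ‖ := by
  simp [basinDeformation, torusPoint]

lemma basinDeformation_mem_Bset (hk : k ≠ 0) (hR : 0 < R) (hkθ : k * θ ≤ π)
    (hr : IsBasinRadius n k R θ β r) {t : ℝ} (ht : t ∈ Icc (0 : ℝ) 1) {z : Fin (n + 1) → ℂ}
    (hz : z ∈ Bset (n + 1) k h R θ β) : basinDeformation k h r t z ∈ Bset (n + 1) k h R θ β := by
  have hz₀ := ne_zero_of_mem_Bset hk hz
  have hr₀ := hr.pos
  have ht₀ : 0 < r ^ (n + 1) := pow_pos hr₀ _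
  have hu : ‖pprod z‖ = ‖z 0‖ * ∏ i : Fin n, ‖z i.succ‖ := by
    rw [pprod, norm_prod, Fin.prod_univ_succ]
  set u := pprod z
  have key : ∀ x, 0 ≤ x → x < ‖u‖ ^ β →
      geomInterp t x r < ‖sectorInterp (sectorAngle k h) (r ^ (n + 1)) t u‖ ^ β := by
    intro x hx hxu
    rw [norm_sectorInterp _ ht₀.le, geomInterp_rpow (norm_nonneg u) ht₀.le]
    exact geomInterp_lt_geomInterp hx hr₀.le hxu hr.lt_rpow ht.1 ht.2
  have hnorm_tail : ∀ i : Fin n, ‖radialInterp r t (z i.succ)‖ = geomInterp t ‖z i.succ‖ r :=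
    fun i => norm_radialInterp hr₀.le t (hz₀ i.succ)
  refine withProd_mem_Bset (fun i => norm_ne_zero_iff.1 ?_)
    (sectorInterp_mem_Ssector hk hR hkθ ht₀ hr.pow_lt_cos.le ht hz.2) ?_
    (fun i => (hnorm_tail i).trans_lt (key _ (norm_nonneg _) (hz.1 i.succ)))
  · rw [hnorm_tail]; exact (geomInterp_pos (norm_pos_iff.2 (hz₀ _)) hr₀).ne'
  · have hprod : ∏ i : Fin n, ‖z i.succ‖ ≠ 0 :=
      Finset.prod_ne_zero_iff.2 fun i _ => norm_ne_zero_iff.2 (hz₀ i.succ)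
    have hhead : geomInterp t ‖u‖ (r ^ (n + 1)) / ∏ i : Fin n, geomInterp t ‖z i.succ‖ r
        = geomInterp t ‖z 0‖ r := by
      rw [prod_geomInterp _ (fun _ _ => norm_nonneg _) (fun _ _ => hr₀.le), Finset.prod_const,
        Finset.card_univ, Fintype.card_fin, ← geomInterp_div (norm_nonneg _) (by positivity)
        (by positivity) (by positivity), hu, mul_div_cancel_right₀ _ hprod, pow_succ,
        mul_div_cancel_left₀ _ (pow_ne_zero _ hr₀.ne')]
    simp only [hnorm_tail, norm_sectorInterp _ ht₀.le]
    rw [hhead, ← norm_sectorInterp (sectorAngle k h) ht₀.le]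
    exact key _ (norm_nonneg _) (hz.1 0)

lemma torusPoint_mem_Bset (hR : 0 < R) (hθ₀ : 0 < θ) (hr : IsBasinRadius n k R θ β r)
    {w : Fin n → ℂ} (hw : ∀ i, ‖w i‖ = 1) : torusPoint k h r w ∈ Bset (n + 1) k h R θ β := by
  have hr₀ := hr.pos
  have ht₀ : 0 < r ^ (n + 1) := pow_pos hr₀ _
  have hnorm : ‖(↑(r ^ (n + 1)) : ℂ) * exp (↑(sectorAngle k h) * I)‖ = r ^ (n + 1) :=
    norm_ofReal_mul_exp ht₀.le _
  have hsector : (↑(r ^ (n + 1)) : ℂ) * exp (↑(sectorAngle k h) * I) ∈ Ssector k h R θ := by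
    have h := (ofReal_mul_exp_mem_Ssector_iff (k := k) (h := h) (θ := θ) hR ht₀
      ⟨neg_lt_zero.2 Real.pi_pos, Real.pi_pos.le⟩).2
    rw [zero_add] at h
    refine h ⟨?_, by rwa [abs_zero]⟩
    rw [mul_zero, Real.cos_zero]
    exact hr.pow_lt_cos.trans_le (div_le_div_of_nonneg_right (Real.cos_le_one _) hR.le)
  have hnorm_tail : ∀ i, ‖(r : ℂ) * w i‖ = r := fun i => by
    rw [norm_mul, norm_real, Real.norm_of_nonneg hr₀.le, hw, mul_one]
  refine withProd_mem_Bset (fun i => norm_ne_zero_iff.1 (by rw [hnorm_tail]; exact hr₀.ne'))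
    hsector ?_ (fun i => by rw [hnorm_tail, hnorm]; exact hr.lt_rpow)
  simp only [hnorm, hnorm_tail, Finset.prod_const, Finset.card_univ, Fintype.card_fin]
  rw [pow_succ, mul_div_cancel_left₀ _ (pow_ne_zero _ hr₀.ne')]
  exact hr.lt_rpow

lemma continuous_basinDeformation (hk : k ≠ 0) (hθ : θ ≤ π) (hr : 0 < r) :
    Continuous fun p : unitInterval × Bset (n + 1) k h R θ β =>
      basinDeformation k h r p.1 (p.2 : Fin (n + 1) → ℂ) := by
  have hz₀ : ∀ (p : unitInterval × Bset (n + 1) k h R θ β) j, (p.2 : Fin (n + 1) → ℂ) j ≠ 0 :=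
    fun p => ne_zero_of_mem_Bset hk p.2.2
  have hτ : Continuous fun p : unitInterval × Bset (n + 1) k h R θ β => (p.1 : ℝ) := by fun_prop
  have hz : Continuous fun p : unitInterval × Bset (n + 1) k h R θ β =>
      (p.2 : Fin (n + 1) → ℂ) := by
    fun_prop
  refine Continuous.withProd ?_ (continuous_pi fun i =>
      hτ.radialInterp ((continuous_apply _).comp hz) (fun p => hz₀ p _) hr.ne')
    fun p i => by
      rw [← norm_ne_zero_iff, norm_radialInterp hr.le _ (hz₀ p _)]
      exact (geomInterp_pos (norm_pos_iff.2 (hz₀ p _)) hr).ne'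
  exact hτ.sectorInterp (continuous_finsetProd _ fun j _ => (continuous_apply j).comp hz)
    (fun p => mul_exp_mem_slitPlane_of_mem_Ssector hk hθ p.2.2.2) (pow_pos hr _).ne'

end basin

section torus

variable {n k h : ℕ} {R θ β r : ℝ}

def torusRetraction (hk : k ≠ 0) : C(Bset (n + 1) k h R θ β, Fin n → sphere (0 : ℂ) 1) where
  toFun z i := ⟨(z : Fin (n + 1) → ℂ) i.succ / ‖(z : Fin (n + 1) → ℂ) i.succ‖, by
    rw [mem_sphere_zero_iff_norm, norm_div, norm_real, norm_norm,
      div_self (norm_ne_zero_iff.2 (ne_zero_of_mem_Bset hk z.2 _))]⟩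
  continuous_toFun := by
    refine continuous_pi fun i => Continuous.subtype_mk ?_ _
    have hz : Continuous fun z : Bset (n + 1) k h R θ β => (z : Fin (n + 1) → ℂ) i.succ :=
      (continuous_apply i.succ).comp continuous_subtype_val
    exact hz.div (continuous_ofReal.comp (continuous_norm.comp hz)) fun z =>
      ofReal_ne_zero.2 (norm_ne_zero_iff.2 (ne_zero_of_mem_Bset hk z.2 _))

def torusEmbedding (hR : 0 < R) (hθ₀ : 0 < θ) (hr : IsBasinRadius n k R θ β r) :
    C(Fin n → sphere (0 : ℂ) 1, Bset (n + 1) k h R θ β) where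
  toFun w := ⟨torusPoint k h r fun i => w i, torusPoint_mem_Bset hR hθ₀ hr fun i => by simp⟩
  continuous_toFun := by
    refine Continuous.subtype_mk (continuous_const.withProd ?_ fun w i => ?_) _
    · fun_prop
    · exact mul_ne_zero (ofReal_ne_zero.2 hr.pos.ne') (ne_zero_of_mem_sphere one_ne_zero (w i))

lemma torusRetraction_comp_torusEmbedding (hk : k ≠ 0) (hR : 0 < R) (hθ₀ : 0 < θ)
    (hr : IsBasinRadius n k R θ β r) :
    (torusRetraction hk).comp (torusEmbedding (h := h) hR hθ₀ hr) = ContinuousMap.id _ := by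
  ext w i
  have hw : ‖(w i : ℂ)‖ = 1 := by simp
  simp [torusRetraction, torusEmbedding, torusPoint, withProd, hw,
    abs_of_pos hr.pos, hr.pos.ne']

def basinHomotopy (hk : k ≠ 0) (hR : 0 < R) (hθ₀ : 0 < θ) (hkθ : k * θ ≤ π)
    (hr : IsBasinRadius n k R θ β r) :
    ContinuousMap.Homotopy (ContinuousMap.id (Bset (n + 1) k h R θ β))
      ((torusEmbedding hR hθ₀ hr).comp (torusRetraction hk)) where
  toFun p := ⟨basinDeformation k h r p.1 p.2, basinDeformation_mem_Bset hk hR hkθ hr p.1.2 p.2.2⟩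
  continuous_toFun := by
    have hθπ : θ ≤ π :=
      (le_mul_of_one_le_left hθ₀.le (Nat.one_le_cast.2 (Nat.one_le_iff_ne_zero.2 hk))).trans hkθ
    exact (continuous_basinDeformation hk hθπ hr.pos).subtype_mk _
  map_zero_left z := Subtype.ext (basinDeformation_zero (ne_zero_of_mem_Bset hk z.2))
  map_one_left z := Subtype.ext (basinDeformation_one _)

end torus

theorem nonempty_homotopyEquiv_Bset_torus {n k h : ℕ} {R θ β : ℝ} (hk : k ≠ 0) (hR : 0 < R)
    (hθ₀ : 0 < θ) (hkθ : k * θ < π / 2) (hβ : (n + 1) * β < 1) :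
    Nonempty (ContinuousMap.HomotopyEquiv (Bset (n + 1) k h R θ β) (Fin n → sphere (0 : ℂ) 1)) := by
  obtain ⟨r, hr⟩ := exists_isBasinRadius hk hR hθ₀ hkθ hβ
  refine ⟨⟨torusRetraction hk, torusEmbedding hR hθ₀ hr,
    ⟨(basinHomotopy hk hR hθ₀ (by linarith [Real.pi_pos]) hr).symm⟩, ?_⟩⟩
  rw [torusRetraction_comp_torusEmbedding]

theorem stmt17_general (d k h : ℕ) (R θ β : ℝ) (hR : 0 < R) (hθ : θ ∈ Ioo 0 (Real.pi / (2 * (k : ℝ))))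
    (hβ : β ∈ Ioo 0 (1 / (d : ℝ))) :
    (Bset d k h R θ β).Nonempty ∧
    Nonempty (ContinuousMap.HomotopyEquiv (Bset d k h R θ β)
      (Fin (d - 1) → Metric.sphere (0 : ℂ) 1)) := by
  obtain ⟨hθ₀, hθk⟩ := hθ
  obtain ⟨hβ₀, hβd⟩ := hβ
  have hk : k ≠ 0 := by
    rintro rfl
    simp only [CharP.cast_eq_zero, mul_zero, div_zero] at hθk
    linarith
  obtain ⟨n, rfl⟩ : ∃ n, d = n + 1 := Nat.exists_eq_succ_of_ne_zero <| by
    rintro rfl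
    simp only [CharP.cast_eq_zero, div_zero] at hβd
    linarith
  have hkθ : k * θ < π / 2 := by
    rw [lt_div_iff₀ (by positivity)] at hθk
    linarith
  have hβn : (n + 1) * β < 1 := by
    rw [lt_div_iff₀' (by positivity)] at hβd
    exact_mod_cast hβd
  obtain ⟨e⟩ := nonempty_homotopyEquiv_Bset_torus (h := h) hk hR hθ₀ hkθ hβn
  exact ⟨⟨_, (e.invFun (fun _ => ⟨1, by simp⟩ : Fin n → sphere (0 : ℂ) 1)).2⟩, ⟨e⟩⟩

/-- Each local basin `B_h(R,θ,β)` is nonempty and homotopy equivalent to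
the torus `(S¹)^{d-1}`. -/
theorem stmt17 (d k h : ℕ) [NeZero d] (hd : 2 ≤ d) (hk : 1 ≤ k) (hh : h < k)
    (R θ β : ℝ) (hR : 0 < R) (hθ : θ ∈ Ioo 0 (Real.pi / (2 * (k : ℝ))))
    (hβ : β ∈ Ioo 0 (1 / (d : ℝ))) :
    (Bset d k h R θ β).Nonempty ∧
    Nonempty (ContinuousMap.HomotopyEquiv (Bset d k h R θ β)
      (Fin (d - 1) → Metric.sphere (0 : ℂ) 1)) :=
  stmt17_general d k h R θ β hR hθ hβ
end
end

section
/- Let λ_1,…,λ_d∈ℂ∖{0} and let A⊆{α∈ℕ^d : |α|≥2}. Let i_0∈{1,…,d} be an index with |λ_{i_0}|=min_{1≤i≤d}|λ_i|, let n∈ℕ satisfy n−1≥2·min_{1≤i≤d}|λ_i|, and set θ:=min(min_{1≤i≤d}|λ_i|,1)/n. Let m≥1, j∈{1,…,d}, and let α,β∈A with β≤α componentwise, β≠α, and α−β+e_{i_0}∈A. If |λ^α−λ_j|<θ·ω_A(m) and |λ^β−λ_j|<θ·ω_A(m), then |α−β|≥m. -/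
open Complex Metric Set Filter Topology Asymptotics

noncomputable section

/-!
Suppose `|α - β| < m` and put `p = λ^(α-β)`. Then `α - β + e_{i₀}` has degree at most `m`, so
`ω_A(m) ≤ ‖λ_{i₀} p - λ_{i₀}‖ = ‖λ_{i₀}‖ ‖p - 1‖`. On the other hand `λ^α = λ^β p` and `λ^β` are
both `θ ω_A(m)`-close to `λ_j`, so `‖λ^β‖ ‖p - 1‖ < 2 θ ω_A(m)` while
`‖λ^β‖ > ‖λ_{i₀}‖ - θ ω_A(m)`. Together these force `‖λ_{i₀}‖ < θ (2 ‖λ_{i₀}‖ + ω_A(m))`,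
whereas `ω_A(m) ≤ 1` and the choice of `n` give `θ (2 ‖λ_{i₀}‖ + 1) ≤ θ n ≤ ‖λ_{i₀}‖`.
-/

section SmallDivisors

variable {K : Type*} [NormedDivisionRing K] {x p c μ : K} {δ ω : ℝ}

theorem norm_mul_norm_sub_one_lt (hxp : ‖x * p - μ‖ < δ) (hx : ‖x - μ‖ < δ) :
    ‖x‖ * ‖p - 1‖ < 2 * δ := by
  calc ‖x‖ * ‖p - 1‖ = ‖(x * p - μ) - (x - μ)‖ := by rw [← norm_mul]; congr 1; noncomm_ring
    _ ≤ ‖x * p - μ‖ + ‖x - μ‖ := norm_sub_le _ _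
    _ < 2 * δ := by linarith

theorem mul_norm_sub_lt_of_le_norm_mul_norm_sub_one (hω₀ : 0 < ω)
    (hω : ω ≤ ‖c‖ * ‖p - 1‖) (hc : ‖c‖ ≤ ‖μ‖)
    (hxp : ‖x * p - μ‖ < δ) (hx : ‖x - μ‖ < δ) :
    ω * (‖c‖ - δ) < 2 * δ * ‖c‖ := by
  have hx_lower : ‖c‖ - δ < ‖x‖ := by
    have := norm_sub_norm_le μ x
    rw [norm_sub_rev] at this
    linarith
  have hclose := norm_mul_norm_sub_one_lt hxp hx
  calc ω * (‖c‖ - δ) < ω * ‖x‖ := mul_lt_mul_of_pos_left hx_lower hω₀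
    _ ≤ ‖c‖ * ‖p - 1‖ * ‖x‖ := mul_le_mul_of_nonneg_right hω (norm_nonneg x)
    _ = ‖c‖ * (‖x‖ * ‖p - 1‖) := by ring
    _ ≤ ‖c‖ * (2 * δ) := mul_le_mul_of_nonneg_left hclose.le (norm_nonneg c)
    _ = 2 * δ * ‖c‖ := by ring

end SmallDivisors

section MultiIndex

variable {d : ℕ}

theorem degree_add (α β : Fin d → ℕ) : degree (α + β) = degree α + degree β :=
  Finset.sum_add_distrib

theorem degree_single (i : Fin d) (k : ℕ) : degree (Pi.single i k) = k := by
  simp [degree]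

theorem degree_pos_of_lt {α β : Fin d → ℕ} (h : β < α) : 0 < degree (α - β) := by
  obtain ⟨i, hi⟩ := Pi.lt_def.mp h |>.2
  exact Finset.sum_pos' (fun _ _ => Nat.zero_le _)
    ⟨i, Finset.mem_univ i, Nat.sub_pos_of_lt hi⟩

variable (lam : Fin d → ℂ)

theorem lampow_add (α β : Fin d → ℕ) : lampow lam (α + β) = lampow lam α * lampow lam β := by
  simp only [lampow, Pi.add_apply, pow_add, Finset.prod_mul_distrib]

theorem lampow_single_one (i : Fin d) : lampow lam (Pi.single i 1) = lam i := by
  simp [lampow, Pi.single_apply, pow_ite]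

variable (A : Set (Fin d → ℕ)) (r : ℕ)

theorem bddBelow_omegaA_set : BddBelow ({x | ∃ α ∈ A, 2 ≤ degree α ∧ degree α ≤ r ∧
    ∃ i, x = ‖lampow lam α - lam i‖} ∪ {1} : Set ℝ) := by
  refine ⟨0, ?_⟩
  rintro x (⟨α, -, -, -, i, rfl⟩ | rfl)
  · exact norm_nonneg _
  · exact zero_le_one

theorem omegaA_le_one : omegaA lam A r ≤ 1 :=
  csInf_le (bddBelow_omegaA_set lam A r) (Or.inr rfl)

theorem omegaA_le_norm {γ : Fin d → ℕ} (hγ : γ ∈ A) (h2 : 2 ≤ degree γ) (hr : degree γ ≤ r)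
    (i : Fin d) : omegaA lam A r ≤ ‖lampow lam γ - lam i‖ :=
  csInf_le (bddBelow_omegaA_set lam A r) (Or.inl ⟨γ, hγ, h2, hr, i, rfl⟩)

end MultiIndex

theorem mul_two_mul_add_one_le {L θ : ℝ} {n : ℕ} (hL : 0 ≤ L) (hn : 2 * L ≤ (n : ℝ) - 1)
    (hθ : θ = min L 1 / n) : θ * (2 * L + 1) ≤ L := by
  have hn₀ : (0 : ℝ) < n := by linarith
  calc θ * (2 * L + 1) ≤ θ * n := by
        gcongr
        · rw [hθ]; positivity
        · linarith
    _ = min L 1 := by rw [hθ]; field_simp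
    _ ≤ L := min_le_left L 1

theorem stmt19_general (d : ℕ) (lam : Fin d → ℂ)
    (A : Set (Fin d → ℕ))
    (i0 : Fin d) (hi0 : ∀ i, ‖lam i0‖ ≤ ‖lam i‖)
    (n : ℕ) (hn : 2 * ‖lam i0‖ ≤ (n : ℝ) - 1)
    (θ : ℝ) (hθ : θ = min (‖lam i0‖) 1 / (n : ℝ))
    (m : ℕ) (j : Fin d)
    (α β : Fin d → ℕ) (hle : β ≤ α) (hne : β ≠ α)
    (hshift : (fun i => α i - β i + if i = i0 then 1 else 0) ∈ A)
    (hsmallα : 2 ≤ m → ‖lampow lam α - lam j‖ < θ * omegaA lam A m)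
    (hsmallβ : 2 ≤ m → ‖lampow lam β - lam j‖ < θ * omegaA lam A m) :
    m ≤ ∑ i, (α i - β i) := by
  by_contra! hlt
  set γ := α - β
  set L := ‖lam i0‖
  set ω := omegaA lam A m
  have hγ : 0 < degree γ := degree_pos_of_lt (lt_of_le_of_ne hle hne)
  have hdeg : degree γ < m := hlt
  have hm2 : 2 ≤ m := by omega
  have hθω : 0 < θ * ω := (norm_nonneg _).trans_lt (hsmallα hm2)
  have hθ₀ : 0 ≤ θ := by rw [hθ]; positivity
  have hω₀ : 0 < ω := pos_of_mul_pos_right hθω hθ₀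
  have hα : lampow lam α = lampow lam β * lampow lam γ := by
    rw [← lampow_add, add_tsub_cancel_of_le hle]
  have hγ_shift : γ + Pi.single i0 1 ∈ A := by
    convert hshift using 1
    funext i
    simp [γ, Pi.single_apply]
  have hωγ : ω ≤ L * ‖lampow lam γ - 1‖ := by
    have := omegaA_le_norm lam A m hγ_shift (by rw [degree_add, degree_single]; omega)
      (by rw [degree_add, degree_single]; omega) i0
    rwa [lampow_add, lampow_single_one, ← sub_one_mul, norm_mul, mul_comm] at this
  have hsep := mul_norm_sub_lt_of_le_norm_mul_norm_sub_one hω₀ hωγ (hi0 j)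
    (hα ▸ hsmallα hm2) (hsmallβ hm2)
  have hL : L - θ * ω < 2 * θ * L :=
    lt_of_mul_lt_mul_left (by linarith) hω₀.le
  have hconst := mul_two_mul_add_one_le (norm_nonneg _) hn hθ
  have hω₁ := omegaA_le_one lam A m
  have : θ * ω ≤ θ * 1 := mul_le_mul_of_nonneg_left hω₁ hθ₀
  linarith

/-- **Siegel's small-divisor separation lemma.** If `α > β` in `A` (with
`α − β + e_{i₀} ∈ A`) both give small divisors below `θ·ω_A(m)` for the same index `j`
(the smallness hypotheses being vacuous for `m = 1`, by the convention `ω_A(1) = +∞`),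
then `|α − β| ≥ m`. -/
theorem stmt19 (d : ℕ) (hd : 1 ≤ d) (lam : Fin d → ℂ) (hlam : ∀ i, lam i ≠ 0)
    (A : Set (Fin d → ℕ)) (hA : ∀ α ∈ A, 2 ≤ degree α)
    (i0 : Fin d) (hi0 : ∀ i, ‖lam i0‖ ≤ ‖lam i‖)
    (n : ℕ) (hn : 2 * ‖lam i0‖ ≤ (n : ℝ) - 1)
    (θ : ℝ) (hθ : θ = min (‖lam i0‖) 1 / (n : ℝ))
    (m : ℕ) (hm : 1 ≤ m) (j : Fin d)
    (α β : Fin d → ℕ) (hαA : α ∈ A) (hβA : β ∈ A) (hle : β ≤ α) (hne : β ≠ α)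
    (hshift : (fun i => α i - β i + if i = i0 then 1 else 0) ∈ A)
    (hsmallα : 2 ≤ m → ‖lampow lam α - lam j‖ < θ * omegaA lam A m)
    (hsmallβ : 2 ≤ m → ‖lampow lam β - lam j‖ < θ * omegaA lam A m) :
    m ≤ ∑ i, (α i - β i) :=
  stmt19_general d lam A i0 hi0 n hn θ hθ m j α β hle hne hshift hsmallα hsmallβ
end
end
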